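/- arXiv:1305.6285 — 7 statements merged into one kernel-verified Lean document; each statement's English description precedes it below -/
import Mathlib

section
/- Let ‖·‖ be a norm on ℝ². If a, b, c ∈ ℝ² form a p-equilateral set (i.e. ‖a−b‖ = ‖b−c‖ = ‖c−a‖ = p with p > 0), then there exists a point s ∈ ℝ² with ‖a−s‖ = ‖b−s‖ = ‖c−s‖ ≤ p. In other words, every 3-point equilateral set in a normed plane has a circumcenter at distance at most the common distance. -/
/-- `N` is a norm on the space. -/
def IsNorm {n : ℕ} (N : (Fin n → ℝ) → ℝ) : Prop :=
  (∀ x, 0 ≤ N x) ∧ (∀ x, N x = 0 ↔ x = 0) ∧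
    (∀ (a : ℝ) x, N (a • x) = |a| * N x) ∧ ∀ x y, N (x + y) ≤ N x + N y

section aux
variable {N : (Fin 2 → ℝ) → ℝ}

lemma IsNorm.neg (hN : IsNorm N) (x : Fin 2 → ℝ) : N (-x) = N x := by
  have h := hN.2.2.1 (-1) x
  simpa using h

lemma IsNorm.sub_rev (hN : IsNorm N) (x y : Fin 2 → ℝ) : N (x - y) = N (y - x) := by
  rw [← hN.neg (x - y)]; ring_nf

lemma IsNorm.tri_sub (hN : IsNorm N) (u v : Fin 2 → ℝ) : N (u - v) ≤ N u + N v := by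
  have h := hN.2.2.2 u (-v)
  rw [hN.neg] at h
  simpa [sub_eq_add_neg] using h

lemma IsNorm.lip (hN : IsNorm N) : ∃ C > 0, ∀ x, N x ≤ C * ‖x‖ := by
  classical
  set e0 : Fin 2 → ℝ := Pi.single 0 1
  set e1 : Fin 2 → ℝ := Pi.single 1 1
  refine ⟨N e0 + N e1 + 1, by have := hN.1 e0; have := hN.1 e1; linarith, fun x => ?_⟩
  have hx : x = x 0 • e0 + x 1 • e1 := by
    ext i
    fin_cases i <;> simp [e0, e1]
  calc N x = N (x 0 • e0 + x 1 • e1) := by rw [← hx]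
    _ ≤ N (x 0 • e0) + N (x 1 • e1) := hN.2.2.2 _ _
    _ = |x 0| * N e0 + |x 1| * N e1 := by rw [hN.2.2.1, hN.2.2.1]
    _ ≤ ‖x‖ * N e0 + ‖x‖ * N e1 := by
        have h0 : |x 0| ≤ ‖x‖ := by
          simpa using norm_le_pi_norm x 0
        have h1 : |x 1| ≤ ‖x‖ := by
          simpa using norm_le_pi_norm x 1
        have := hN.1 e0; have := hN.1 e1
        nlinarith
    _ ≤ (N e0 + N e1 + 1) * ‖x‖ := by nlinarith [norm_nonneg x]

lemma IsNorm.continuous (hN : IsNorm N) : Continuous N := by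
  obtain ⟨C, hC, hCle⟩ := hN.lip
  have : LipschitzWith (Real.toNNReal C) N := by
    apply LipschitzWith.of_dist_le_mul
    intro x y
    have h1 : N x - N y ≤ N (x - y) := by
      have := hN.2.2.2 (x - y) y
      simpa using this
    have h2 : N y - N x ≤ N (x - y) := by
      have := hN.2.2.2 (y - x) x
      rw [hN.sub_rev y x] at *
      simp at this
      linarith [hN.sub_rev x y, hN.2.2.2 (y-x) x]
    have h3 : N (x - y) ≤ C * ‖x - y‖ := hCle _
    rw [Real.dist_eq, Real.coe_toNNReal _ hC.le, dist_eq_norm]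
    rw [abs_le]
    constructor <;> nlinarith
  exact this.continuous

lemma IsNorm.lower (hN : IsNorm N) : ∃ m > 0, ∀ x, m * ‖x‖ ≤ N x := by
  have hcs : IsCompact (Metric.sphere (0 : Fin 2 → ℝ) 1) := isCompact_sphere 0 1
  have hne : (Metric.sphere (0 : Fin 2 → ℝ) 1).Nonempty := by
    refine ⟨fun _ => 1, ?_⟩
    simp [Metric.mem_sphere, dist_eq_norm]
  obtain ⟨x₀, hx₀mem, hx₀min⟩ := hcs.exists_isMinOn hne hN.continuous.continuousOn
  have hx₀ne : x₀ ≠ 0 := by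
    intro h
    rw [Metric.mem_sphere, dist_eq_norm, sub_zero, h] at hx₀mem
    simp at hx₀mem
  have hm : 0 < N x₀ := by
    rcases lt_or_eq_of_le (hN.1 x₀) with h | h
    · exact h
    · exact absurd ((hN.2.1 x₀).mp h.symm) hx₀ne
  refine ⟨N x₀, hm, fun x => ?_⟩
  rcases eq_or_ne x 0 with rfl | hx
  · simp [(hN.2.1 0).mpr rfl]
  · have hnx : 0 < ‖x‖ := norm_pos_iff.mpr hx
    set u : Fin 2 → ℝ := ‖x‖⁻¹ • x
    have hu : u ∈ Metric.sphere (0 : Fin 2 → ℝ) 1 := by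
      simp [u, Metric.mem_sphere, dist_eq_norm, norm_smul, abs_of_pos (inv_pos.mpr hnx),
        inv_mul_cancel₀ hnx.ne']
    have h1 : N x₀ ≤ N u := hx₀min hu
    have h2 : N x = ‖x‖ * N u := by
      have : x = ‖x‖ • u := by
        rw [smul_smul, mul_inv_cancel₀ hnx.ne', one_smul]
      calc N x = N (‖x‖ • u) := by rw [← this]
        _ = ‖x‖ * N u := by rw [hN.2.2.1, abs_of_pos hnx]
    nlinarith

/-- Moving the candidate center slightly toward `u` strictly decreases all three distances,
provided the distance to `u` is the (positive) max and the other two are strictly smaller. -/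
lemma IsNorm.move (hN : IsNorm N) {B : Set (Fin 2 → ℝ)} (hB : Convex ℝ B)
    {u v w s : Fin 2 → ℝ} {r : ℝ} (hs : s ∈ B) (huB : u ∈ B) (hr : 0 < r)
    (hu : N (u - s) = r) (hv : N (v - s) < r) (hw : N (w - s) < r) :
    ∃ t', t' ∈ B ∧ N (u - t') < r ∧ N (v - t') < r ∧ N (w - t') < r := by
  set ε : ℝ := r - max (N (v - s)) (N (w - s)) with hε
  have hvmax : N (v - s) ≤ r - ε := by simp [hε]
  have hwmax : N (w - s) ≤ r - ε := by simp [hε]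
  have hε0 : 0 < ε := by
    have := max_lt hv hw
    simp only [hε]; linarith
  set t : ℝ := min (1/2) (ε / (2 * r)) with ht
  have ht0 : 0 < t := lt_min (by norm_num) (div_pos hε0 (by linarith))
  have ht1 : t ≤ 1/2 := min_le_left _ _
  have htr : t * r ≤ ε / 2 := by
    have h2 : t ≤ ε / (2 * r) := min_le_right _ _
    have : ε / (2 * r) * r = ε / 2 := by field_simp
    nlinarith
  have hneg : N ((-t) • (u - s)) = t * r := by
    rw [hN.2.2.1, hu, abs_neg, abs_of_pos ht0]
  refine ⟨(1 - t) • s + t • u, hB hs huB (by linarith) (by linarith) (by ring), ?_, ?_, ?_⟩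
  · have hid : u - ((1 - t) • s + t • u) = (1 - t) • (u - s) := by
      ext i; simp only [Pi.sub_apply, Pi.add_apply, Pi.smul_apply, smul_eq_mul]; ring
    rw [hid, hN.2.2.1, abs_of_pos (by linarith : (0:ℝ) < 1 - t), hu]
    nlinarith
  · have hid : v - ((1 - t) • s + t • u) = (v - s) + (-t) • (u - s) := by
      ext i; simp only [Pi.sub_apply, Pi.add_apply, Pi.smul_apply, smul_eq_mul]; ring
    rw [hid]
    have h := hN.2.2.2 (v - s) ((-t) • (u - s))
    rw [hneg] at h
    linarith
  · have hid : w - ((1 - t) • s + t • u) = (w - s) + (-t) • (u - s) := by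
      ext i; simp only [Pi.sub_apply, Pi.add_apply, Pi.smul_apply, smul_eq_mul]; ring
    rw [hid]
    have h := hN.2.2.2 (w - s) ((-t) • (u - s))
    rw [hneg] at h
    linarith

/-- The key contradiction: at a minimizer of the max of the three distances,
no distance can be strictly below the max. -/
lemma IsNorm.no_strict (hN : IsNorm N) {B : Set (Fin 2 → ℝ)} (hB : Convex ℝ B)
    {x y z s : Fin 2 → ℝ} {p r : ℝ} (hp : 0 < p)
    (hs : s ∈ B) (hxB : x ∈ B) (hyB : y ∈ B)
    (hxy : N (x - y) = p) (hyz : N (y - z) = p)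
    (hdx : N (x - s) ≤ r) (hdy : N (y - s) ≤ r) (hdz : N (z - s) < r)
    (hmin : ∀ t ∈ B, r ≤ N (x - t) ∨ r ≤ N (y - t) ∨ r ≤ N (z - t)) : False := by
  rcases le_or_gt r (p / 2) with hsmall | hbig
  · have h := hN.tri_sub (y - s) (z - s)
    have hid : y - s - (z - s) = y - z := by ring
    rw [hid, hyz] at h
    linarith
  · have hr0 : 0 < r := by linarith
    rcases lt_or_eq_of_le hdx with hxlt | hxeq
    · rcases lt_or_eq_of_le hdy with hylt | hyeq
      · rcases hmin s hs with h | h | h <;> linarith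
      · obtain ⟨t', ht'B, h1, h2, h3⟩ := hN.move hB hs hyB hr0 hyeq hxlt hdz
        rcases hmin t' ht'B with h | h | h <;> linarith
    · rcases lt_or_eq_of_le hdy with hylt | hyeq
      · obtain ⟨t', ht'B, h1, h2, h3⟩ := hN.move hB hs hxB hr0 hxeq hylt hdz
        rcases hmin t' ht'B with h | h | h <;> linarith
      · -- both distances to x and y equal r; move toward the midpoint of x and y
        set w : Fin 2 → ℝ := (1/2 : ℝ) • x + (1/2 : ℝ) • y with hw
        have hwB : w ∈ B := hB hxB hyB (by norm_num) (by norm_num) (by norm_num)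
        set K : ℝ := N (w - s) with hK
        have hK0 : 0 ≤ K := hN.1 _
        set t : ℝ := min (1/2) ((r - N (z - s)) / (2 * K + 1)) with htdef
        have ht0 : 0 < t := lt_min (by norm_num) (div_pos (by linarith) (by linarith))
        have ht1 : t ≤ 1/2 := min_le_left _ _
        have htK : t * K < r - N (z - s) := by
          have h2 : t ≤ (r - N (z - s)) / (2 * K + 1) := min_le_right _ _
          have h3 : (r - N (z - s)) / (2 * K + 1) * (2 * K + 1) = r - N (z - s) := by
            field_simp
          nlinarith
        have hxw : N (x - w) = p / 2 := by
          have hid : x - w = (1/2 : ℝ) • (x - y) := by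
            ext i; simp only [hw, Pi.sub_apply, Pi.add_apply, Pi.smul_apply, smul_eq_mul]; ring
          rw [hid, hN.2.2.1, hxy, show |(1:ℝ)/2| = 1/2 from by norm_num]
          ring
        have hyw : N (y - w) = p / 2 := by
          have hid : y - w = (-(1/2) : ℝ) • (x - y) := by
            ext i; simp only [hw, Pi.sub_apply, Pi.add_apply, Pi.smul_apply, smul_eq_mul]; ring
          rw [hid, hN.2.2.1, hxy, show |(-((1:ℝ)/2))| = 1/2 from by rw [abs_neg]; norm_num]
          ring
        set t' : Fin 2 → ℝ := (1 - t) • s + t • w with ht'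
        have ht'B : t' ∈ B := hB hs hwB (by linarith) (by linarith) (by ring)
        have hx' : N (x - t') < r := by
          have hid : x - t' = (1 - t) • (x - s) + t • (x - w) := by
            ext i; simp only [ht', Pi.sub_apply, Pi.add_apply, Pi.smul_apply, smul_eq_mul]; ring
          rw [hid]
          have h := hN.2.2.2 ((1 - t) • (x - s)) (t • (x - w))
          rw [hN.2.2.1, hN.2.2.1, hxw, abs_of_pos ht0,
            abs_of_pos (by linarith : (0:ℝ) < 1 - t), hxeq] at h
          nlinarith [mul_pos ht0 (by linarith : (0:ℝ) < r - p / 2)]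
        have hy' : N (y - t') < r := by
          have hid : y - t' = (1 - t) • (y - s) + t • (y - w) := by
            ext i; simp only [ht', Pi.sub_apply, Pi.add_apply, Pi.smul_apply, smul_eq_mul]; ring
          rw [hid]
          have h := hN.2.2.2 ((1 - t) • (y - s)) (t • (y - w))
          rw [hN.2.2.1, hN.2.2.1, hyw, abs_of_pos ht0,
            abs_of_pos (by linarith : (0:ℝ) < 1 - t), hyeq] at h
          nlinarith [mul_pos ht0 (by linarith : (0:ℝ) < r - p / 2)]
        have hz' : N (z - t') < r := by
          have hid : z - t' = (z - s) + (-t) • (w - s) := by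
            ext i; simp only [ht', Pi.sub_apply, Pi.add_apply, Pi.smul_apply, smul_eq_mul]; ring
          rw [hid]
          have h := hN.2.2.2 (z - s) ((-t) • (w - s))
          rw [hN.2.2.1, abs_neg, abs_of_pos ht0, ← hK] at h
          linarith
        rcases hmin t' ht'B with h | h | h <;> linarith
end aux


theorem circumcenter_of_equilateral_triangle (N : (Fin 2 → ℝ) → ℝ) (hN : IsNorm N)
    (a b c : Fin 2 → ℝ) (p : ℝ) (hp : 0 < p)
    (hab : N (a - b) = p) (hbc : N (b - c) = p) (hca : N (c - a) = p) :
    ∃ s : Fin 2 → ℝ, N (a - s) = N (b - s) ∧ N (b - s) = N (c - s) ∧ N (a - s) ≤ p := by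
  obtain ⟨m, hm, hml⟩ := hN.lower
  set R : ℝ := ‖a‖ + (p + 1) / m with hR
  set B : Set (Fin 2 → ℝ) := Metric.closedBall 0 R with hBdef
  have hBconv : Convex ℝ B := convex_closedBall 0 R
  have hpm : 0 < (p + 1) / m := div_pos (by linarith) hm
  have haB : a ∈ B := by
    simp only [hBdef, Metric.mem_closedBall, dist_zero_right]
    rw [hR]; linarith
  have hbB : b ∈ B := by
    simp only [hBdef, Metric.mem_closedBall, dist_zero_right]
    have h1 : m * ‖a - b‖ ≤ p := by have := hml (a - b); rw [hab] at this; linarith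
    have h2 : ‖b‖ ≤ ‖a‖ + ‖a - b‖ := by
      calc ‖b‖ = ‖a - (a - b)‖ := by ring_nf
        _ ≤ ‖a‖ + ‖a - b‖ := norm_sub_le _ _
    have h3 : ‖a - b‖ ≤ (p + 1) / m := by
      rw [le_div_iff₀ hm]; nlinarith
    rw [hR]; linarith
  have hcB : c ∈ B := by
    simp only [hBdef, Metric.mem_closedBall, dist_zero_right]
    have h1 : m * ‖c - a‖ ≤ p := by have := hml (c - a); rw [hca] at this; linarith
    have h2 : ‖c‖ ≤ ‖a‖ + ‖c - a‖ := by
      calc ‖c‖ = ‖a + (c - a)‖ := by ring_nf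
        _ ≤ ‖a‖ + ‖c - a‖ := norm_add_le _ _
    have h3 : ‖c - a‖ ≤ (p + 1) / m := by
      rw [le_div_iff₀ hm]; nlinarith
    rw [hR]; linarith
  set F : (Fin 2 → ℝ) → ℝ := fun t => max (N (a - t)) (max (N (b - t)) (N (c - t))) with hF
  have hFc : ContinuousOn F B := by
    apply Continuous.continuousOn
    exact ((hN.continuous.comp (continuous_const.sub continuous_id)).max
      ((hN.continuous.comp (continuous_const.sub continuous_id)).max
        (hN.continuous.comp (continuous_const.sub continuous_id))))
  have hBcpt : IsCompact B := isCompact_closedBall 0 R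
  obtain ⟨s, hsB, hsmin⟩ := hBcpt.exists_isMinOn ⟨a, haB⟩ hFc
  set r : ℝ := F s with hr
  have hd1 : N (a - s) ≤ r := le_max_left _ _
  have hd2 : N (b - s) ≤ r := le_trans (le_max_left _ _) (le_max_right _ _)
  have hd3 : N (c - s) ≤ r := le_trans (le_max_right _ _) (le_max_right _ _)
  have hrp : r ≤ p := by
    have h : F s ≤ F a := isMinOn_iff.mp hsmin a haB
    have hFa : F a = p := by
      have h0 : N (a - a) = 0 := by rw [sub_self]; exact (hN.2.1 0).mpr rfl
      have hba : N (b - a) = p := by rw [hN.sub_rev]; exact hab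
      have hca' : N (c - a) = p := hca
      simp only [hF, h0, hba, hca']
      rw [max_self, max_eq_right hp.le]
    rw [hFa] at h
    exact h
  have hmin : ∀ t ∈ B, r ≤ N (a - t) ∨ r ≤ N (b - t) ∨ r ≤ N (c - t) := by
    intro t htB
    have h : F s ≤ F t := isMinOn_iff.mp hsmin t htB
    simp only [hF] at h
    rcases le_max_iff.mp h with h | h
    · exact Or.inl h
    rcases le_max_iff.mp h with h | h
    · exact Or.inr (Or.inl h)
    · exact Or.inr (Or.inr h)
  have he1 : N (a - s) = r := by
    by_contra hne
    exact hN.no_strict hBconv hp hsB hbB hcB hbc hca hd2 hd3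
      (lt_of_le_of_ne hd1 hne) (fun t ht => by rcases hmin t ht with h | h | h <;> tauto)
  have he2 : N (b - s) = r := by
    by_contra hne
    exact hN.no_strict hBconv hp hsB hcB haB hca hab hd3 hd1
      (lt_of_le_of_ne hd2 hne) (fun t ht => by rcases hmin t ht with h | h | h <;> tauto)
  have he3 : N (c - s) = r := by
    by_contra hne
    exact hN.no_strict hBconv hp hsB haB hbB hab hbc hd1 hd2
      (lt_of_le_of_ne hd3 hne) (fun t ht => by rcases hmin t ht with h | h | h <;> tauto)
  exact ⟨s, by rw [he1, he2], by rw [he2, he3], by rw [he1]; exact hrp⟩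
end

section
/- Let p₀, p₁, …, pₙ ∈ ℝⁿ be the vertices of a non-degenerate simplex (i.e. p₁ − p₀, …, pₙ − p₀ are linearly independent). Then each difference pᵢ − pⱼ (for i ≠ j) is a vertex (extreme point) of the convex polytope conv { pᵢ − pⱼ : 0 ≤ i ≠ j ≤ n }. Equivalently, no pᵢ − pⱼ lies in the convex hull of the remaining differences. -/
/-!
With `b` the affine basis formed by the `pₖ`, the linear part `g` of the affine map
`coord i - coord j` sends `pₗ - pₘ` to `δᵢₗ - δᵢₘ - δⱼₗ + δⱼₘ`, which is at most `2` with
equality only for `(l, m) = (i, j)`. So `pᵢ - pⱼ` is the unique maximiser of `g` on the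
convex hull of the differences, hence an extreme point of it.
-/

open Set

section LinearFunctional

variable {𝕜 E : Type*} [Field 𝕜] [LinearOrder 𝕜] [IsStrictOrderedRing 𝕜] [AddCommGroup E]
  [Module 𝕜 E] (f : E →ₗ[𝕜] 𝕜) {s : Set E} {x y z : E}

theorem LinearMap.apply_lt_of_mem_segment_of_ne_left (hz : f z < f x) (hy : y ∈ segment 𝕜 x z)
    (hyx : y ≠ x) : f y < f x := by
  obtain ⟨a, b, ha, hb, hab, rfl⟩ := hy
  rcases hb.eq_or_lt with rfl | hb
  · obtain rfl : a = 1 := by simpa using hab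
    simp at hyx
  · rw [map_add, map_smul, map_smul, smul_eq_mul, smul_eq_mul]
    obtain rfl : a = 1 - b := eq_sub_of_add_eq hab
    nlinarith

theorem LinearMap.apply_lt_of_mem_convexHull_of_ne (hlt : ∀ y ∈ s, y ≠ x → f y < f x)
    (hx : x ∈ s) (hy : y ∈ convexHull 𝕜 s) (hyx : y ≠ x) : f y < f x := by
  rcases (s \ {x}).eq_empty_or_nonempty with hs | hs
  · rw [← insert_sdiff_self_of_mem hx, hs, insert_empty_eq, convexHull_singleton] at hy
    exact absurd hy hyx
  rw [← insert_sdiff_self_of_mem hx, convexHull_insert hs, convexJoin_singleton_left] at hy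
  obtain ⟨z, hz, hyz⟩ := mem_iUnion₂.mp hy
  have hzx : f z < f x :=
    convexHull_min (fun w hw ↦ hlt w hw.1 hw.2) (convex_halfSpace_lt f.isLinear _) hz
  exact f.apply_lt_of_mem_segment_of_ne_left hzx hyz hyx

theorem mem_extremePoints_convexHull_of_apply_lt (hlt : ∀ y ∈ s, y ≠ x → f y < f x)
    (hx : x ∈ s) : x ∈ (convexHull 𝕜 s).extremePoints 𝕜 := by
  refine (convex_convexHull 𝕜 s).mem_extremePoints_iff_convex_sdiff.mpr
    ⟨subset_convexHull 𝕜 s hx, ?_⟩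
  have hsdiff : convexHull 𝕜 s \ {x} = convexHull 𝕜 s ∩ {y | f y < f x} := by
    ext y
    exact ⟨fun ⟨hy, hyx⟩ ↦ ⟨hy, f.apply_lt_of_mem_convexHull_of_ne hlt hx hy hyx⟩,
      fun ⟨hy, hyx⟩ ↦ ⟨hy, fun h ↦ hyx.ne (congrArg f h)⟩⟩
  rw [hsdiff]
  exact (convex_convexHull 𝕜 s).inter (convex_halfSpace_lt f.isLinear _)

end LinearFunctional

namespace AffineBasis

theorem coord_sub_coord_linear_vsub {ι k V P : Type*} [Ring k] [AddCommGroup V] [Module k V]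
    [AddTorsor V P] [DecidableEq ι] (b : AffineBasis ι k P) (i j l m : ι) :
    ((b.coord i).linear - (b.coord j).linear) (b l -ᵥ b m) =
      ((if i = l then 1 else 0) - if i = m then 1 else 0) -
        ((if j = l then 1 else 0) - if j = m then 1 else 0) := by
  simp only [LinearMap.sub_apply, AffineMap.linearMap_vsub, coord_apply, vsub_eq_sub]

theorem vsub_mem_extremePoints_convexHull {ι k V P : Type*} [Field k] [LinearOrder k]
    [IsStrictOrderedRing k] [AddCommGroup V] [Module k V] [AddTorsor V P]
    (b : AffineBasis ι k P) {i j : ι} (hij : i ≠ j) :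
    b i -ᵥ b j ∈
      (convexHull k {v | ∃ l m, l ≠ m ∧ v = b l -ᵥ b m}).extremePoints k := by
  classical
  refine mem_extremePoints_convexHull_of_apply_lt ((b.coord i).linear - (b.coord j).linear)
    ?_ ⟨i, j, hij, rfl⟩
  rintro _ ⟨l, m, hlm, rfl⟩ hne
  rw [coord_sub_coord_linear_vsub, coord_sub_coord_linear_vsub]
  split_ifs <;> grind

end AffineBasis

theorem differences_are_vertices_general (n : ℕ)
    (p : Fin (n + 1) → (Fin n → ℝ)) (hp : AffineIndependent ℝ p) :
    ∀ i j : Fin (n + 1), i ≠ j →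
      p i - p j ∈ Set.extremePoints ℝ
        (convexHull ℝ {x | ∃ k l : Fin (n + 1), k ≠ l ∧ x = p k - p l}) := by
  intro i j hij
  have hspan : affineSpan ℝ (Set.range p) = ⊤ := by
    rw [hp.affineSpan_eq_top_iff_card_eq_finrank_add_one]
    simp
  exact (AffineBasis.mk p hp hspan).vsub_mem_extremePoints_convexHull hij

theorem differences_are_vertices (n : ℕ) (hn : 1 ≤ n)
    (p : Fin (n + 1) → (Fin n → ℝ)) (hp : AffineIndependent ℝ p) :
    ∀ i j : Fin (n + 1), i ≠ j →
      p i - p j ∈ Set.extremePoints ℝ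
        (convexHull ℝ {x | ∃ k l : Fin (n + 1), k ≠ l ∧ x = p k - p l}) :=
  differences_are_vertices_general n p hp
end

section
/- Let p₀, …, pₙ ∈ ℝⁿ be affinely independent, set qᵢ = pᵢ − p₀, and suppose qₙ = Σ_{0 ≤ k ≠ l ≤ n} t_{k,l} (p_k − p_l) with all t_{k,l} ∈ [0,1] and Σ t_{k,l} = 1. Then t_{n,0} = 1 and t_{k,l} = 0 for all (k,l) ≠ (n,0). -/
/-!
In `∑ τ k l • (p k - p l)` the coefficient of `p i` is the row sum minus the column sum of `τ`
at `i`, so affine independence forces these net outflows to be `1` at the last vertex, `-1` at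
`0` and `0` elsewhere. As `τ ≥ 0` has total mass `1`, the row of the last vertex carries all of
it and no column but that of `0` receives any.
-/

open Finset

section Flow

variable {ι : Type*} [Fintype ι]

lemma sum_sum_smul_sub_eq_sum_smul {V : Type*} [AddCommGroup V] [Module ℝ V]
    (τ : ι → ι → ℝ) (p : ι → V) :
    ∑ k, ∑ l, τ k l • (p k - p l) = ∑ i, (∑ l, τ i l - ∑ k, τ k i) • p i := by
  simp only [smul_sub, sub_smul, sum_sub_distrib, sum_smul]
  rw [sum_comm (f := fun k l => τ k l • p l)]

lemma eq_single_of_sum_sub_sum_eq_single_sub_single [DecidableEq ι] {τ : ι → ι → ℝ}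
    (hτ : ∀ k l, 0 ≤ τ k l) (hsum : ∑ k, ∑ l, τ k l = 1) {a b : ι} (hab : a ≠ b)
    (hflow : ∀ i, ∑ l, τ i l - ∑ k, τ k i = (Pi.single b 1 - Pi.single a 1 : ι → ℝ) i) :
    τ b a = 1 ∧ ∀ k l, (k, l) ≠ (b, a) → τ k l = 0 := by
  set R : ι → ℝ := fun k => ∑ l, τ k l
  set C : ι → ℝ := fun l => ∑ k, τ k l
  have hR : ∀ k, 0 ≤ R k := fun k => sum_nonneg fun l _ => hτ k l
  have hC : ∀ l, 0 ≤ C l := fun l => sum_nonneg fun k _ => hτ k l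
  have hτR : ∀ k l, τ k l ≤ R k := fun k l => single_le_sum (fun j _ => hτ k j) (mem_univ l)
  have hτC : ∀ k l, τ k l ≤ C l :=
    fun k l => single_le_sum (f := fun j => τ j l) (fun j _ => hτ j l) (mem_univ k)
  have hRb : R b = 1 ∧ C b = 0 := by
    have hb := hflow b
    have hRb_le : R b ≤ 1 := hsum ▸ single_le_sum (fun k _ => hR k) (mem_univ b)
    simp only [Pi.sub_apply, Pi.single_eq_same, Pi.single_eq_of_ne hab.symm, sub_zero] at hb
    constructor <;> linarith [hC b]
  have hR0 : ∀ k, k ≠ b → R k = 0 := by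
    intro k hk
    have := add_le_sum (fun j _ => hR j) (mem_univ b) (mem_univ k) hk.symm
    linarith [hR k, hRb.1, hsum]
  have hC0 : ∀ l, l ≠ a → C l = 0 := by
    intro l hl
    rcases eq_or_ne l b with rfl | hlb
    · exact hRb.2
    · have := hflow l
      simp only [Pi.sub_apply, Pi.single_eq_of_ne hlb, Pi.single_eq_of_ne hl, sub_self] at this
      linarith [hR0 l hlb]
  have hzero : ∀ k l, (k, l) ≠ (b, a) → τ k l = 0 := by
    intro k l hkl
    refine le_antisymm ?_ (hτ k l)
    by_cases hk : k = b
    · exact hC0 l (fun hl => hkl (by rw [hk, hl])) ▸ hτC k l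
    · exact hR0 k hk ▸ hτR k l
  refine ⟨?_, hzero⟩
  calc τ b a = R b := (Fintype.sum_eq_single a fun l hl => hzero b l (by simp [hl])).symm
    _ = 1 := hRb.1

end Flow

theorem convex_combination_of_differences_trivial (n : ℕ) (hn : 1 ≤ n)
    (p : Fin (n + 1) → (Fin n → ℝ)) (hp : AffineIndependent ℝ p)
    (t : Fin (n + 1) → Fin (n + 1) → ℝ)
    (ht01 : ∀ k l, 0 ≤ t k l ∧ t k l ≤ 1)
    (htsum : (∑ k, ∑ l, if k ≠ l then t k l else 0) = 1)
    (hcomb : p (Fin.last n) - p 0 =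
      ∑ k, ∑ l, if k ≠ l then t k l • (p k - p l) else 0) :
    t (Fin.last n) 0 = 1 ∧
      ∀ k l, k ≠ l → (k, l) ≠ (Fin.last n, 0) → t k l = 0 := by
  set τ : Fin (n + 1) → Fin (n + 1) → ℝ := fun k l => if k ≠ l then t k l else 0
  have hτ : ∀ k l, 0 ≤ τ k l := fun k l => by
    by_cases h : k = l <;> simp [τ, h, (ht01 k l).1]
  have h0last : (0 : Fin (n + 1)) ≠ Fin.last n := by
    simpa [Fin.ext_iff] using (by omega : 0 ≠ n)
  have hcombτ : ∑ k, ∑ l, τ k l • (p k - p l) = p (Fin.last n) - p 0 := by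
    rw [hcomb]
    refine sum_congr rfl fun k _ => sum_congr rfl fun l _ => ?_
    by_cases h : k = l <;> simp [τ, h]
  have hflow := hp.eq_of_sum_eq_sum (s := univ)
    (w₁ := fun i => ∑ l, τ i l - ∑ k, τ k i) (w₂ := Pi.single (Fin.last n) 1 - Pi.single 0 1)
    (by simp [sum_sub_distrib, sum_comm (f := τ)])
    (by rw [← sum_sum_smul_sub_eq_sum_smul, hcombτ]; simp [sub_smul, sum_sub_distrib])
  obtain ⟨hlast, hzero⟩ := eq_single_of_sum_sub_sum_eq_single_sub_single hτ htsum h0last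
    fun i => hflow i (mem_univ i)
  refine ⟨by simpa [τ, h0last.symm] using hlast, fun k l hkl hkl' => ?_⟩
  simpa [τ, hkl] using hzero k l hkl'
end

section
/- Let C ⊂ ℝ² be a strictly convex body (a compact convex set with nonempty interior containing no segment in its boundary), and let p₀, p₁, p₂ be vertices of a non-degenerate triangle. Then there is at most one pair (z, r) with z ∈ ℝ² and r > 0 such that z + r p₀, z + r p₁, and z + r p₂ all lie on the boundary of C. -/
open Set Filter Topology

private lemma support_exists {C : Set (Fin 2 → ℝ)} (hconv : Convex ℝ C)
    (hint : (interior C).Nonempty) {x : Fin 2 → ℝ} (hx : x ∈ frontier C) :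
    ∃ f : (Fin 2 → ℝ) →L[ℝ] ℝ, (∀ y ∈ C, f y ≤ f x) ∧ ∀ y ∈ interior C, f y < f x := by
  have hxint : x ∉ interior C := hx.2
  obtain ⟨f, hf⟩ := geometric_hahn_banach_open_point hconv.interior isOpen_interior hxint
  refine ⟨f, fun y hy => ?_, hf⟩
  obtain ⟨a, ha⟩ := hint
  have key : Tendsto (fun t : ℝ => t * f a + (1 - t) * f y) (𝓝[>] 0) (𝓝 (f y)) := by
    have hc : ContinuousAt (fun t : ℝ => t * f a + (1 - t) * f y) 0 := by fun_prop
    have := hc.tendsto.mono_left (nhdsWithin_le_nhds (s := Set.Ioi (0:ℝ)))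
    simpa using this
  refine le_of_tendsto key ?_
  filter_upwards [Ioo_mem_nhdsGT_of_mem (by norm_num : (0:ℝ) ∈ Set.Ico (0:ℝ) 1)] with t ht
  have hmem : t • a + (1 - t) • y ∈ interior C :=
    hconv.combo_interior_self_mem_interior ha hy ht.1 (by linarith [ht.2]) (by ring)
  have := hf _ hmem
  simp only [map_add, map_smul, smul_eq_mul] at this
  linarith


private lemma support_strict {C : Set (Fin 2 → ℝ)} (hC : IsCompact C) (hconv : Convex ℝ C)
    (hstrict : ∀ x ∈ frontier C, x ∈ Set.extremePoints ℝ C)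
    {x b : Fin 2 → ℝ} (hx : x ∈ frontier C) (hb : b ∈ C) (hne : b ≠ x)
    {f : (Fin 2 → ℝ) →L[ℝ] ℝ} (hf1 : ∀ y ∈ C, f y ≤ f x) (hf2 : ∀ y ∈ interior C, f y < f x) :
    f b < f x := by
  rcases lt_or_eq_of_le (hf1 b hb) with h | h
  · exact h
  exfalso
  have hxC : x ∈ C := hC.isClosed.frontier_subset hx
  set m := (1/2 : ℝ) • x + (1/2 : ℝ) • b with hm
  have hmC : m ∈ C := hconv hxC hb (by norm_num) (by norm_num) (by norm_num)
  have hfm : f m = f x := by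
    have h2 : f m = (1/2) * f x + (1/2) * f b := by
      simp [hm, map_add, map_smul, smul_eq_mul]
    rw [h2, ← h]; ring
  have hmint : m ∉ interior C := fun hmem => absurd (hf2 m hmem) (by rw [hfm]; exact lt_irrefl _)
  have hmf : m ∈ frontier C := ⟨subset_closure hmC, hmint⟩
  have hext := hstrict m hmf
  rw [mem_extremePoints] at hext
  have hseg : m ∈ openSegment ℝ x b := ⟨1/2, 1/2, by norm_num, by norm_num, by norm_num, rfl⟩
  obtain ⟨h1, h2⟩ := hext.2 x hxC b hb hseg
  exact hne (h2.trans h1.symm)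

private lemma cone_pos {f : (Fin 2 → ℝ) →L[ℝ] ℝ} {d1 d2 q : Fin 2 → ℝ} {γ1 γ2 : ℝ}
    (h1 : f d1 ≤ 0) (h2 : f d2 ≤ 0) (hq : q = γ1 • d1 + γ2 • d2) (hfq : 0 < f q) :
    γ1 < 0 ∨ γ2 < 0 := by
  by_contra h
  push_neg at h
  have hval : f q = γ1 * f d1 + γ2 * f d2 := by rw [hq]; simp
  nlinarith [mul_nonpos_iff.mpr (Or.inl ⟨h.1, h1⟩), mul_nonpos_iff.mpr (Or.inl ⟨h.2, h2⟩)]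

private lemma cone_edge {f : (Fin 2 → ℝ) →L[ℝ] ℝ} {z pi pj : Fin 2 → ℝ} {r : ℝ} (hr : 0 < r)
    (h : f (z + r • pj) ≤ f (z + r • pi)) : f (pj - pi) ≤ 0 := by
  simp only [map_add, map_smul, map_sub, smul_eq_mul] at *
  nlinarith

private lemma combinat {x y s : ℝ} (hs : 0 ≤ s)
    (h0 : ¬(x = 0 ∧ y = 0) → (x < 0 ∨ y < 0) ∧ (0 < x ∨ 0 < y))
    (h1 : ¬(x + s = 0 ∧ y = 0) → (y < 0 ∨ 0 < x + y + s) ∧ (0 < y ∨ x + y + s < 0))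
    (h2 : ¬(x = 0 ∧ y + s = 0) → (x < 0 ∨ 0 < x + y + s) ∧ (0 < x ∨ x + y + s < 0)) :
    x = 0 ∧ y = 0 ∧ s = 0 := by
  by_cases c0 : x = 0 ∧ y = 0
  · obtain ⟨hx, hy⟩ := c0
    subst hx; subst hy
    by_cases cs : s = 0
    · exact ⟨rfl, rfl, cs⟩
    · have H := h1 (by simp [cs])
      rcases H.2 with h | h <;> linarith
  · have H0 := h0 c0
    exfalso
    by_cases c1 : x + s = 0 ∧ y = 0
    · obtain ⟨hxs, hy⟩ := c1
      rcases H0.2 with h | h <;> linarith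
    by_cases c2 : x = 0 ∧ y + s = 0
    · obtain ⟨hx, hys⟩ := c2
      rcases H0.2 with h | h <;> linarith
    · have H1 := h1 c1; have H2 := h2 c2
      rcases H0.1 with a1 | a1 <;> rcases H0.2 with a2 | a2 <;> rcases H1.1 with b1 | b1 <;>
        rcases H1.2 with b2 | b2 <;> rcases H2.1 with d1 | d1 <;> rcases H2.2 with d2 | d2 <;>
        linarith


private lemma key (C : Set (Fin 2 → ℝ))
    (hC : IsCompact C) (hconv : Convex ℝ C) (hint : (interior C).Nonempty)
    (hstrict : ∀ x ∈ frontier C, x ∈ Set.extremePoints ℝ C)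
    (p₀ p₁ p₂ : Fin 2 → ℝ) (hp : AffineIndependent ℝ ![p₀, p₁, p₂])
    (z z' : Fin 2 → ℝ) (r r' : ℝ) (hr : 0 < r) (hr' : 0 < r') (hrr : r' ≤ r)
    (ha0 : z + r • p₀ ∈ frontier C) (ha1 : z + r • p₁ ∈ frontier C)
    (ha2 : z + r • p₂ ∈ frontier C) (hb0 : z' + r' • p₀ ∈ frontier C)
    (hb1 : z' + r' • p₁ ∈ frontier C) (hb2 : z' + r' • p₂ ∈ frontier C) :
    z = z' ∧ r = r' := by
  have hsub := hC.isClosed.frontier_subset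
  have hzero : ∀ a b : ℝ, a • (p₁ - p₀) + b • (p₂ - p₀) = 0 → a = 0 ∧ b = 0 := by
    intro a b hab
    have hsum : ∑ i, (![-(a+b), a, b] : Fin 3 → ℝ) i = 0 := by
      simp [Fin.sum_univ_three]
    have hvec : ∑ i, (![-(a+b), a, b] : Fin 3 → ℝ) i • (![p₀, p₁, p₂] : Fin 3 → Fin 2 → ℝ) i = 0 := by
      simp only [Fin.sum_univ_three, Matrix.cons_val_zero, Matrix.cons_val_one, Matrix.head_cons,
        Matrix.cons_val_two, Matrix.tail_cons]
      have h2 : (-(a+b)) • p₀ + a • p₁ + b • p₂ = a • (p₁ - p₀) + b • (p₂ - p₀) := by module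
      rw [h2, hab]
    have hz := affineIndependent_iff.mp hp Finset.univ ![-(a+b), a, b] hsum hvec
    exact ⟨by simpa using hz 1 (Finset.mem_univ _), by simpa using hz 2 (Finset.mem_univ _)⟩
  have hli : LinearIndependent ℝ ![p₁ - p₀, p₂ - p₀] :=
    LinearIndependent.pair_iff.mpr fun a b h => hzero a b h
  have hcard : Fintype.card (Fin 2) = Module.finrank ℝ (Fin 2 → ℝ) := by simp
  set B := basisOfLinearIndependentOfCardEqFinrank hli hcard with hB
  set q0 : Fin 2 → ℝ := (z - z') + (r - r') • p₀ with hq0def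
  set x : ℝ := B.repr q0 0 with hxdef
  set y : ℝ := B.repr q0 1 with hydef
  have hrep : x • (p₁ - p₀) + y • (p₂ - p₀) = q0 := by
    have h := B.sum_repr q0
    rw [Fin.sum_univ_two] at h
    have hB0 : B 0 = p₁ - p₀ := by
      rw [hB, coe_basisOfLinearIndependentOfCardEqFinrank]; simp
    have hB1 : B 1 = p₂ - p₀ := by
      rw [hB, coe_basisOfLinearIndependentOfCardEqFinrank]; simp
    rw [hB0, hB1] at h
    exact h
  have hzz : z - z' = x • (p₁ - p₀) + y • (p₂ - p₀) - (r - r') • p₀ := by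
    rw [hrep, hq0def]; module
  -- supporting functionals
  obtain ⟨f0, hf0le, hf0lt⟩ := support_exists hconv hint ha0
  obtain ⟨f1, hf1le, hf1lt⟩ := support_exists hconv hint ha1
  obtain ⟨f2, hf2le, hf2lt⟩ := support_exists hconv hint ha2
  obtain ⟨g0, hg0le, hg0lt⟩ := support_exists hconv hint hb0
  obtain ⟨g1, hg1le, hg1lt⟩ := support_exists hconv hint hb1
  obtain ⟨g2, hg2le, hg2lt⟩ := support_exists hconv hint hb2
  -- difference vectors expressed in the two relevant edge directions
  have hqa0 : (z + r • p₀) - (z' + r' • p₀) = x • (p₁ - p₀) + y • (p₂ - p₀) := by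
    rw [show (z + r • p₀) - (z' + r' • p₀) = (z - z') + (r - r') • p₀ from by module, hzz]
    module
  have hqa1 : (z + r • p₁) - (z' + r' • p₁)
      = (-(x + y + (r - r'))) • (p₀ - p₁) + y • (p₂ - p₁) := by
    rw [show (z + r • p₁) - (z' + r' • p₁) = (z - z') + (r - r') • p₁ from by module, hzz]
    module
  have hqa1' : (z + r • p₁) - (z' + r' • p₁)
      = (x + (r - r')) • (p₁ - p₀) + y • (p₂ - p₀) := by
    rw [show (z + r • p₁) - (z' + r' • p₁) = (z - z') + (r - r') • p₁ from by module, hzz]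
    module
  have hqa2 : (z + r • p₂) - (z' + r' • p₂)
      = (-(x + y + (r - r'))) • (p₀ - p₂) + x • (p₁ - p₂) := by
    rw [show (z + r • p₂) - (z' + r' • p₂) = (z - z') + (r - r') • p₂ from by module, hzz]
    module
  have hqa2' : (z + r • p₂) - (z' + r' • p₂)
      = x • (p₁ - p₀) + (y + (r - r')) • (p₂ - p₀) := by
    rw [show (z + r • p₂) - (z' + r' • p₂) = (z - z') + (r - r') • p₂ from by module, hzz]
    module
  -- nondegeneracy transfers
  have hne0 : ¬(x = 0 ∧ y = 0) → z' + r' • p₀ ≠ z + r • p₀ := by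
    intro hne heq
    exact hne (hzero x y (by rw [← hqa0, heq, sub_self]))
  have hne1 : ¬(x + (r - r') = 0 ∧ y = 0) → z' + r' • p₁ ≠ z + r • p₁ := by
    intro hne heq
    exact hne (hzero _ y (by rw [← hqa1', heq, sub_self]))
  have hne2 : ¬(x = 0 ∧ y + (r - r') = 0) → z' + r' • p₂ ≠ z + r • p₂ := by
    intro hne heq
    exact hne (hzero x _ (by rw [← hqa2', heq, sub_self]))
  -- the six sign conditions
  have P0a : ¬(x = 0 ∧ y = 0) → (x < 0 ∨ y < 0) := by
    intro hne
    have hlt := support_strict hC hconv hstrict ha0 (hsub hb0) (hne0 hne) hf0le hf0lt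
    exact cone_pos (cone_edge hr (hf0le _ (hsub ha1))) (cone_edge hr (hf0le _ (hsub ha2)))
      hqa0 (by rw [map_sub]; linarith)
  have P0b : ¬(x = 0 ∧ y = 0) → (0 < x ∨ 0 < y) := by
    intro hne
    have hlt := support_strict hC hconv hstrict hb0 (hsub ha0) (fun h => hne0 hne h.symm)
      hg0le hg0lt
    have h := cone_pos (cone_edge hr' (hg0le _ (hsub hb1))) (cone_edge hr' (hg0le _ (hsub hb2)))
      (show (z' + r' • p₀) - (z + r • p₀) = (-x) • (p₁ - p₀) + (-y) • (p₂ - p₀) from by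
        rw [show (z' + r' • p₀) - (z + r • p₀) = -((z + r • p₀) - (z' + r' • p₀)) from by module,
          hqa0]; module)
      (by rw [map_sub]; linarith)
    rcases h with h | h
    · exact Or.inl (by linarith)
    · exact Or.inr (by linarith)
  have P1a : ¬(x + (r - r') = 0 ∧ y = 0) → (y < 0 ∨ 0 < x + y + (r - r')) := by
    intro hne
    have hlt := support_strict hC hconv hstrict ha1 (hsub hb1) (hne1 hne) hf1le hf1lt
    have h := cone_pos (cone_edge hr (hf1le _ (hsub ha0))) (cone_edge hr (hf1le _ (hsub ha2)))
      hqa1 (by rw [map_sub]; linarith)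
    rcases h with h | h
    · exact Or.inr (by linarith)
    · exact Or.inl h
  have P1b : ¬(x + (r - r') = 0 ∧ y = 0) → (0 < y ∨ x + y + (r - r') < 0) := by
    intro hne
    have hlt := support_strict hC hconv hstrict hb1 (hsub ha1) (fun h => hne1 hne h.symm)
      hg1le hg1lt
    have h := cone_pos (cone_edge hr' (hg1le _ (hsub hb0))) (cone_edge hr' (hg1le _ (hsub hb2)))
      (show (z' + r' • p₁) - (z + r • p₁)
          = (x + y + (r - r')) • (p₀ - p₁) + (-y) • (p₂ - p₁) from by
        rw [show (z' + r' • p₁) - (z + r • p₁) = -((z + r • p₁) - (z' + r' • p₁)) from by module,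
          hqa1]; module)
      (by rw [map_sub]; linarith)
    rcases h with h | h
    · exact Or.inr (by linarith)
    · exact Or.inl (by linarith)
  have P2a : ¬(x = 0 ∧ y + (r - r') = 0) → (x < 0 ∨ 0 < x + y + (r - r')) := by
    intro hne
    have hlt := support_strict hC hconv hstrict ha2 (hsub hb2) (hne2 hne) hf2le hf2lt
    have h := cone_pos (cone_edge hr (hf2le _ (hsub ha0))) (cone_edge hr (hf2le _ (hsub ha1)))
      hqa2 (by rw [map_sub]; linarith)
    rcases h with h | h
    · exact Or.inr (by linarith)
    · exact Or.inl h
  have P2b : ¬(x = 0 ∧ y + (r - r') = 0) → (0 < x ∨ x + y + (r - r') < 0) := by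
    intro hne
    have hlt := support_strict hC hconv hstrict hb2 (hsub ha2) (fun h => hne2 hne h.symm)
      hg2le hg2lt
    have h := cone_pos (cone_edge hr' (hg2le _ (hsub hb0))) (cone_edge hr' (hg2le _ (hsub hb1)))
      (show (z' + r' • p₂) - (z + r • p₂)
          = (x + y + (r - r')) • (p₀ - p₂) + (-x) • (p₁ - p₂) from by
        rw [show (z' + r' • p₂) - (z + r • p₂) = -((z + r • p₂) - (z' + r' • p₂)) from by module,
          hqa2]; module)
      (by rw [map_sub]; linarith)
    rcases h with h | h
    · exact Or.inr (by linarith)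
    · exact Or.inl (by linarith)
  obtain ⟨hx0, hy0, hs0⟩ := combinat (by linarith : (0:ℝ) ≤ r - r')
    (fun h => ⟨P0a h, P0b h⟩) (fun h => ⟨P1a h, P1b h⟩) (fun h => ⟨P2a h, P2b h⟩)
  have hr_eq : r = r' := by linarith
  refine ⟨?_, hr_eq⟩
  have : z - z' = 0 := by
    rw [hzz, hx0, hy0, hs0]
    simp
  exact sub_eq_zero.mp this

theorem at_most_one_inscribed_homothet (C : Set (Fin 2 → ℝ))
    (hC : IsCompact C) (hconv : Convex ℝ C) (hint : (interior C).Nonempty)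
    (hstrict : ∀ x ∈ frontier C, x ∈ Set.extremePoints ℝ C)
    (p₀ p₁ p₂ : Fin 2 → ℝ) (hp : AffineIndependent ℝ ![p₀, p₁, p₂]) :
    ∀ (z z' : Fin 2 → ℝ) (r r' : ℝ), 0 < r → 0 < r' →
      z + r • p₀ ∈ frontier C → z + r • p₁ ∈ frontier C → z + r • p₂ ∈ frontier C →
      z' + r' • p₀ ∈ frontier C → z' + r' • p₁ ∈ frontier C → z' + r' • p₂ ∈ frontier C →
      z = z' ∧ r = r' := by
  intro z z' r r' hr hr' ha0 ha1 ha2 hb0 hb1 hb2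
  rcases le_total r' r with h | h
  · exact key C hC hconv hint hstrict p₀ p₁ p₂ hp z z' r r' hr hr' h ha0 ha1 ha2 hb0 hb1 hb2
  · obtain ⟨h1, h2⟩ := key C hC hconv hint hstrict p₀ p₁ p₂ hp z' z r' r hr' hr h
      hb0 hb1 hb2 ha0 ha1 ha2
    exact ⟨h1.symm, h2.symm⟩
end

section
/- For every n ≥ 4 there exists a smooth and strictly convex norm ‖·‖ on ℝⁿ and points a₁, a₂, a₃, a₄ ∈ ℝⁿ forming a p-equilateral set (for some p > 0) such that no point a₅ ∈ ℝⁿ satisfies ‖a₅ − aᵢ‖ = p for i = 1, 2, 3, 4. That is, there exists a smooth, strictly convex n-dimensional normed space containing a 4-element equilateral set that is maximal with respect to inclusion. -/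
/-- Every point of the unit sphere lies on exactly one supporting hyperplane of the unit ball. -/
def IsSmoothNorm {n : ℕ} (N : (Fin n → ℝ) → ℝ) : Prop :=
  ∀ x, N x = 1 → ∃! f : (Fin n → ℝ) →ₗ[ℝ] ℝ, f x = 1 ∧ ∀ y, N y ≤ 1 → f y ≤ 1

/-- The unit sphere contains no line segment. -/
def IsStrictlyConvexNorm {n : ℕ} (N : (Fin n → ℝ) → ℝ) : Prop :=
  ∀ x y, N x = 1 → N y = 1 → x ≠ y → N ((1 / 2 : ℝ) • (x + y)) < 1


/-!
The norm is `‖L₁ x‖ + ‖L₂ x‖` for two injective weighted Euclidean embeddings `L₁, L₂`. It is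
strictly convex because equality in its triangle inequality forces equality in the Euclidean
one, and smooth because it is differentiable away from `0`, so that the only supporting
functional at a unit vector is its derivative there. With diagonal weights it is even in every
coordinate and strictly increasing in `x₀²`, in `x₁²` and in `∑_{i≥2} xᵢ²`. For the points
`±e₀, ±½e₁ + e₂` this forces a fifth equidistant point to have `x₀ = x₁ = 0`; its distance to
`e₀` then forces `∑_{i≥2} xᵢ² < 49/4`, which makes its distance to `½e₁ + e₂` too short.
-/

open Real Filter Topology Function

section NormCriteria

variable {n : ℕ} {N : (Fin n → ℝ) → ℝ}

theorem IsNorm.le_of_forall_le_one (hN : IsNorm N) {g : (Fin n → ℝ) →ₗ[ℝ] ℝ}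
    (hg : ∀ y, N y ≤ 1 → g y ≤ 1) (y : Fin n → ℝ) : g y ≤ N y := by
  obtain ⟨hnonneg, hzero, hsmul, -⟩ := hN
  rcases (hnonneg y).eq_or_lt with h | h
  · rw [(hzero y).1 h.symm, map_zero]
    exact hnonneg 0
  · have hunit : N ((N y)⁻¹ • y) ≤ 1 := by
      rw [hsmul, abs_of_pos (inv_pos.2 h), inv_mul_cancel₀ h.ne']
    have := hg _ hunit
    rw [map_smul, smul_eq_mul] at this
    calc g y = N y * ((N y)⁻¹ * g y) := by field_simp
      _ ≤ N y * 1 := by gcongr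
      _ = N y := mul_one _

theorem HasDerivAt.le_of_forall_pos_le {g : ℝ → ℝ} {g' c : ℝ} (hg : HasDerivAt g g' 0)
    (h : ∀ t > 0, g t ≤ g 0 + t * c) : g' ≤ c := by
  have hslope : Tendsto (fun t => t⁻¹ • (g (0 + t) - g 0)) (𝓝[>] 0) (𝓝 g') :=
    (hasDerivAt_iff_tendsto_slope_zero.1 hg).mono_left
      (nhdsWithin_mono 0 fun t (ht : 0 < t) => ht.ne')
  refine le_of_tendsto hslope (eventually_nhdsWithin_of_forall fun t (ht : 0 < t) => ?_)
  rw [zero_add, smul_eq_mul, inv_mul_le_iff₀ ht]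
  linarith [h t ht]

theorem IsNorm.isSmoothNorm (hN : IsNorm N) (hd : ∀ x, N x = 1 → DifferentiableAt ℝ N x) :
    IsSmoothNorm N := by
  intro x hx
  set D := fderiv ℝ N x
  have hD (y : Fin n → ℝ) : HasDerivAt (fun t : ℝ => N (x + t • y)) (D y) 0 :=
    (hd x hx).hasFDerivAt.hasLineDerivAt y
  have hDx : D x = 1 := by
    refine (hD x).unique (((hasDerivAt_id (0 : ℝ)).const_add 1).congr_of_eventuallyEq ?_)
    filter_upwards [Ioi_mem_nhds (show (-1 : ℝ) < 0 by norm_num)] with t ht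
    rw [show x + t • x = (1 + t) • x by module, hN.2.2.1, hx, abs_of_pos (by linarith [ht.out])]
    simp
  refine ⟨D, ⟨hDx, fun y hy => ?_⟩, fun g ⟨hgx, hgy⟩ => ?_⟩
  · refine ((hD y).le_of_forall_pos_le fun t ht => ?_).trans hy
    rw [zero_smul, add_zero]
    calc N (x + t • y) ≤ N x + N (t • y) := hN.2.2.2 _ _
      _ = N x + t * N y := by rw [hN.2.2.1, abs_of_pos ht]
  · refine LinearMap.ext fun y => ?_
    have hg : HasDerivAt (fun t : ℝ => g (x + t • y)) (g y) 0 := by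
      simpa [hgx] using ((hasDerivAt_id (0 : ℝ)).mul_const (g y)).const_add 1
    have hmin : IsLocalMin (fun t : ℝ => N (x + t • y) - g (x + t • y)) 0 :=
      Eventually.of_forall fun t => by
        simpa [hx, hgx] using hN.le_of_forall_le_one hgy (x + t • y)
    exact (sub_eq_zero.1 (hmin.hasDerivAt_eq_zero ((hD y).sub hg))).symm

theorem IsNorm.isStrictlyConvexNorm (hN : IsNorm N)
    (h : ∀ x y, N (x + y) = N x + N y → SameRay ℝ x y) : IsStrictlyConvexNorm N := by
  obtain ⟨hnonneg, hzero, hsmul, hadd⟩ := hN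
  intro x y hx hy hxy
  have hmid : N ((1 / 2 : ℝ) • (x + y)) = N (x + y) / 2 := by
    rw [hsmul, abs_of_pos (by norm_num)]; ring
  rw [hmid]
  refine lt_of_le_of_ne (by linarith [hadd x y]) fun heq => hxy ?_
  have hne (z : Fin n → ℝ) (hz : N z = 1) : z ≠ 0 := fun h0 => by simp [(hzero z).2 h0] at hz
  obtain ⟨r₁, r₂, hr₁, hr₂, hr⟩ :=
    (h x y (by linarith)).exists_pos (hne x hx) (hne y hy)
  have hr : r₁ = r₂ := by
    simpa [hsmul, hx, hy, abs_of_pos hr₁, abs_of_pos hr₂] using congrArg N hr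
  subst hr
  exact smul_right_injective _ hr₁.ne' hr

variable {F₁ F₂ : Type*} [NormedAddCommGroup F₁] [NormedAddCommGroup F₂]

theorem isNorm_norm_add_norm [NormedSpace ℝ F₁] [NormedSpace ℝ F₂]
    {L₁ : (Fin n → ℝ) →L[ℝ] F₁} (L₂ : (Fin n → ℝ) →L[ℝ] F₂) (h₁ : Injective L₁) :
    IsNorm fun x => ‖L₁ x‖ + ‖L₂ x‖ := by
  refine ⟨fun x => by positivity, fun x => ⟨fun h => ?_, fun h => by simp [h]⟩,
    fun a x => by simp [norm_smul, mul_add], fun x y => ?_⟩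
  · have : ‖L₁ x‖ = 0 := by linarith [norm_nonneg (L₁ x), norm_nonneg (L₂ x)]
    exact h₁ (by simpa using this)
  · simp only [map_add]
    linarith [norm_add_le (L₁ x) (L₁ y), norm_add_le (L₂ x) (L₂ y)]

theorem isStrictlyConvexNorm_norm_add_norm [NormedSpace ℝ F₁] [StrictConvexSpace ℝ F₁]
    [NormedSpace ℝ F₂] {L₁ : (Fin n → ℝ) →L[ℝ] F₁} (L₂ : (Fin n → ℝ) →L[ℝ] F₂)
    (h₁ : Injective L₁) : IsStrictlyConvexNorm fun x => ‖L₁ x‖ + ‖L₂ x‖ := by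
  refine (isNorm_norm_add_norm L₂ h₁).isStrictlyConvexNorm fun x y hxy => ?_
  simp only [map_add] at hxy
  rw [← h₁.sameRay_map_iff, sameRay_iff_norm_add]
  linarith [norm_add_le (L₁ x) (L₁ y), norm_add_le (L₂ x) (L₂ y)]

theorem isSmoothNorm_norm_add_norm [InnerProductSpace ℝ F₁] [InnerProductSpace ℝ F₂]
    {L₁ : (Fin n → ℝ) →L[ℝ] F₁} {L₂ : (Fin n → ℝ) →L[ℝ] F₂} (h₁ : Injective L₁)
    (h₂ : Injective L₂) : IsSmoothNorm fun x => ‖L₁ x‖ + ‖L₂ x‖ := by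
  refine (isNorm_norm_add_norm L₂ h₁).isSmoothNorm fun x hx => ?_
  have hx0 : x ≠ 0 := by rintro rfl; simp at hx
  exact (L₁.differentiableAt.norm ℝ (by simpa using h₁.ne hx0)).add
    (L₂.differentiableAt.norm ℝ (by simpa using h₂.ne hx0))

end NormCriteria

section WeightedEmbedding

variable {n : ℕ}

noncomputable def weightedEmbedding (w : Fin n → ℝ) :
    (Fin n → ℝ) →L[ℝ] EuclideanSpace ℝ (Fin n) :=
  (EuclideanSpace.equiv (Fin n) ℝ).symm.toContinuousLinearMap ∘L
    ContinuousLinearMap.pi fun i => √(w i) • ContinuousLinearMap.proj i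

theorem weightedEmbedding_apply (w z : Fin n → ℝ) (i : Fin n) :
    weightedEmbedding w z i = √(w i) * z i := rfl

theorem norm_weightedEmbedding {w : Fin n → ℝ} (hw : ∀ i, 0 ≤ w i) (z : Fin n → ℝ) :
    ‖weightedEmbedding w z‖ = √(∑ i, w i * z i ^ 2) := by
  simp [EuclideanSpace.norm_eq, weightedEmbedding_apply, mul_pow, sq_sqrt (hw _)]

theorem weightedEmbedding_injective {w : Fin n → ℝ} (hw : ∀ i, 0 < w i) :
    Injective (weightedEmbedding w) := fun z z' h => funext fun i => by
  simpa [weightedEmbedding_apply, (sqrt_pos.2 (hw i)).ne'] using congrArg (· i) h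

end WeightedEmbedding

namespace EquilateralExample

variable {m : ℕ}

/- The weights make all six distances between `±e₀, ±½e₁ + e₂` equal to `33 / 2`:
`‖2e₀‖ = 1/2 + 16`, `‖e₀ ± ½e₁ - e₂‖ = 849/100 + 801/100` and `‖e₁‖ = 65/4 + 1/4`. -/
noncomputable def weightA : Fin (m + 3) → ℝ :=
  Fin.cons (1 / 16) (Fin.cons (4225 / 16) fun _ => 240079 / 40000)

noncomputable def weightB : Fin (m + 3) → ℝ :=
  Fin.cons 64 (Fin.cons (1 / 16) fun _ => 5779 / 40000)

noncomputable def exNorm (z : Fin (m + 3) → ℝ) : ℝ :=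
  ‖weightedEmbedding weightA z‖ + ‖weightedEmbedding weightB z‖

noncomputable def profile (α β γ : ℝ) : ℝ :=
  √(α / 16 + 4225 / 16 * β + 240079 / 40000 * γ) + √(64 * α + β / 16 + 5779 / 40000 * γ)

noncomputable def point (u v r : ℝ) : Fin (m + 3) → ℝ :=
  Fin.cons u (Fin.cons v (Fin.cons r 0))

theorem point_two (u v r : ℝ) : point u v r (2 : Fin (m + 3)) = r := by
  rw [point, ← Fin.succ_one_eq_two', Fin.cons_succ, Fin.cons_one, Fin.cons_zero]

theorem cons_cons_pos {a₀ a₁ a : ℝ} (h₀ : 0 < a₀) (h₁ : 0 < a₁) (h : 0 < a) (i : Fin (m + 3)) :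
    0 < (Fin.cons a₀ (Fin.cons a₁ fun _ => a) : Fin (m + 3) → ℝ) i := by
  induction i using Fin.cases with
  | zero => exact h₀
  | succ i => induction i using Fin.cases with
    | zero => exact h₁
    | succ => exact h

theorem sum_cons_cons_mul_sq (a₀ a₁ a : ℝ) (z : Fin (m + 3) → ℝ) :
    ∑ i, (Fin.cons a₀ (Fin.cons a₁ fun _ => a) : Fin (m + 3) → ℝ) i * z i ^ 2 =
      a₀ * z 0 ^ 2 + a₁ * z 1 ^ 2 + a * (z 2 ^ 2 + ∑ k : Fin m, z k.succ.succ.succ ^ 2) := by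
  simp [Fin.sum_univ_succ, Finset.mul_sum, mul_add, add_assoc]

theorem weightA_pos : ∀ i : Fin (m + 3), 0 < weightA i :=
  cons_cons_pos (by norm_num) (by norm_num) (by norm_num)

theorem weightB_pos : ∀ i : Fin (m + 3), 0 < weightB i :=
  cons_cons_pos (by norm_num) (by norm_num) (by norm_num)

theorem exNorm_eq (z : Fin (m + 3) → ℝ) :
    exNorm z = profile (z 0 ^ 2) (z 1 ^ 2) (z 2 ^ 2 + ∑ k : Fin m, z k.succ.succ.succ ^ 2) := by
  rw [exNorm, norm_weightedEmbedding (fun i => (weightA_pos i).le),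
    norm_weightedEmbedding (fun i => (weightB_pos i).le), weightA, weightB,
    sum_cons_cons_mul_sq, sum_cons_cons_mul_sq, profile]
  ring_nf

theorem exNorm_sub_point (x : Fin (m + 3) → ℝ) (u v r : ℝ) :
    exNorm (x - point u v r) = profile ((x 0 - u) ^ 2) ((x 1 - v) ^ 2)
      ((x 2 - r) ^ 2 + ∑ k : Fin m, x k.succ.succ.succ ^ 2) := by
  rw [exNorm_eq]
  simp only [Pi.sub_apply, point_two]
  simp [point]

theorem exNorm_point_sub_point (u v r u' v' r' : ℝ) :
    exNorm (point u v r - point u' v' r' : Fin (m + 3) → ℝ) =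
      profile ((u - u') ^ 2) ((v - v') ^ 2) ((r - r') ^ 2) := by
  rw [exNorm_sub_point, point_two]
  simp [point]

theorem profile_strictMonoOn_left {β γ : ℝ} (hβ : 0 ≤ β) (hγ : 0 ≤ γ) :
    StrictMonoOn (fun α => profile α β γ) (Set.Ici 0) := fun α (hα : 0 ≤ α) α' _ h => by
  simp only [profile]; gcongr

theorem profile_strictMonoOn_middle {α γ : ℝ} (hα : 0 ≤ α) (hγ : 0 ≤ γ) :
    StrictMonoOn (fun β => profile α β γ) (Set.Ici 0) := fun β (hβ : 0 ≤ β) β' _ h => by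
  simp only [profile]; gcongr

theorem profile_strictMonoOn_right {α β : ℝ} (hα : 0 ≤ α) (hβ : 0 ≤ β) :
    StrictMonoOn (profile α β) (Set.Ici 0) := fun γ (hγ : 0 ≤ γ) γ' _ h => by
  unfold profile; gcongr

theorem lt_profile_one_zero : 33 / 2 < profile 1 0 (49 / 4) := by
  have h₁ : (857 / 100 : ℝ) < √(1 / 16 + 4225 / 16 * 0 + 240079 / 40000 * (49 / 4)) := by
    rw [lt_sqrt (by norm_num)]; norm_num
  have h₂ : (81 / 10 : ℝ) < √(64 * 1 + 0 / 16 + 5779 / 40000 * (49 / 4)) := by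
    rw [lt_sqrt (by norm_num)]; norm_num
  unfold profile; linarith

theorem profile_zero_quarter_lt : profile 0 (1 / 4) (81 / 4) < 33 / 2 := by
  have h₁ : √(0 / 16 + 4225 / 16 * (1 / 4) + 240079 / 40000 * (81 / 4)) < 137 / 10 := by
    rw [sqrt_lt' (by norm_num)]; norm_num
  have h₂ : √(64 * 0 + 1 / 4 / 16 + 5779 / 40000 * (81 / 4)) < 172 / 100 := by
    rw [sqrt_lt' (by norm_num)]; norm_num
  unfold profile; linarith

theorem profile_zero_quarter_lt_of_profile_one_zero_eq {r s : ℝ} (hs : 0 ≤ s)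
    (h : profile 1 0 (r ^ 2 + s) = 33 / 2) : profile 0 (1 / 4) ((r - 1) ^ 2 + s) < 33 / 2 := by
  have hmono {α β : ℝ} (hα : 0 ≤ α) (hβ : 0 ≤ β) := (profile_strictMonoOn_right hα hβ).monotoneOn
  have hγ : r ^ 2 + s < 49 / 4 := by
    by_contra! hγ
    linarith [lt_profile_one_zero,
      hmono zero_le_one le_rfl (by norm_num : (0 : ℝ) ≤ 49 / 4) (by simp; positivity) hγ]
  have hr : -r < 7 / 2 := by nlinarith
  calc profile 0 (1 / 4) ((r - 1) ^ 2 + s) ≤ profile 0 (1 / 4) (81 / 4) :=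
        hmono le_rfl (by norm_num) (by simp; positivity) (by norm_num) (by nlinarith)
    _ < 33 / 2 := profile_zero_quarter_lt

theorem not_exists_equidistant :
    ¬ ∃ x : Fin (m + 3) → ℝ, exNorm (x - point 1 0 0) = 33 / 2 ∧
      exNorm (x - point (-1) 0 0) = 33 / 2 ∧ exNorm (x - point 0 (1 / 2) 1) = 33 / 2 ∧
      exNorm (x - point 0 (-1 / 2) 1) = 33 / 2 := by
  rintro ⟨x, hA, hB, hC, hD⟩
  simp only [exNorm_sub_point] at hA hB hC hD
  set s := ∑ k : Fin m, x k.succ.succ.succ ^ 2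
  have hs : 0 ≤ s := by positivity
  have hx₀ : x 0 = 0 := by
    have := (profile_strictMonoOn_left (sq_nonneg (x 1 - 0)) (by positivity)).injOn
      (Set.mem_Ici.2 (sq_nonneg _)) (Set.mem_Ici.2 (sq_nonneg _)) (hA.trans hB.symm)
    nlinarith
  have hx₁ : x 1 = 0 := by
    have := (profile_strictMonoOn_middle (sq_nonneg (x 0 - 0)) (by positivity)).injOn
      (Set.mem_Ici.2 (sq_nonneg _)) (Set.mem_Ici.2 (sq_nonneg _)) (hC.trans hD.symm)
    nlinarith
  rw [hx₀, hx₁] at hA hC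
  norm_num at hA hC
  linarith [profile_zero_quarter_lt_of_profile_one_zero_eq hs hA]

end EquilateralExample

open EquilateralExample

theorem smooth_strictly_convex_maximal_equilateral (n : ℕ) (hn : 4 ≤ n) :
    ∃ N : (Fin n → ℝ) → ℝ, IsNorm N ∧ IsSmoothNorm N ∧ IsStrictlyConvexNorm N ∧
      ∃ (a₁ a₂ a₃ a₄ : Fin n → ℝ) (p : ℝ), 0 < p ∧
        N (a₁ - a₂) = p ∧ N (a₁ - a₃) = p ∧ N (a₁ - a₄) = p ∧
        N (a₂ - a₃) = p ∧ N (a₂ - a₄) = p ∧ N (a₃ - a₄) = p ∧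
        ¬ ∃ a₅ : Fin n → ℝ, N (a₅ - a₁) = p ∧ N (a₅ - a₂) = p ∧
          N (a₅ - a₃) = p ∧ N (a₅ - a₄) = p := by
  obtain ⟨m, rfl⟩ : ∃ m, n = m + 3 := ⟨n - 3, by omega⟩
  have hA := weightedEmbedding_injective (weightA_pos (m := m))
  have hB := weightedEmbedding_injective (weightB_pos (m := m))
  refine ⟨exNorm, isNorm_norm_add_norm _ hA, isSmoothNorm_norm_add_norm hA hB,
    isStrictlyConvexNorm_norm_add_norm _ hA, point 1 0 0, point (-1) 0 0, point 0 (1 / 2) 1,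
    point 0 (-1 / 2) 1, 33 / 2, by norm_num, ?_, ?_, ?_, ?_, ?_, ?_, not_exists_equidistant⟩
  all_goals rw [exNorm_point_sub_point]; norm_num [profile]
end

section
/- Let ‖·‖ₖ (k ∈ ℕ) and ‖·‖ be norms on ℝⁿ with (1 − 1/k)‖x‖ₖ ≤ ‖x‖ ≤ (1 + 1/k)‖x‖ₖ for all x, and let a, b, c ∈ ℝⁿ. Suppose for each k there exists dₖ with ‖dₖ − a‖ₖ = ‖dₖ − b‖ₖ = ‖dₖ − c‖ₖ = 1. Then there exists d ∈ ℝⁿ with ‖d − a‖ = ‖d − b‖ = ‖d − c‖ = 1. -/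
/-!
Choose `dₖ` equidistant for `‖·‖ₖ`. Since `‖·‖ₖ` and `‖·‖` agree up to a factor `1 ± 1/k`, the
distances `‖dₖ - a‖`, `‖dₖ - b‖`, `‖dₖ - c‖` tend to `1`. In particular `(dₖ)` is bounded, so a
subsequence converges to some `d`, and by continuity of `‖·‖` all three distances from `d` are `1`.
-/

open Filter Topology

def IsNorm.toSeminorm {n : ℕ} {N : (Fin n → ℝ) → ℝ} (hN : IsNorm N) :
    Seminorm ℝ (Fin n → ℝ) :=
  Seminorm.of N hN.2.2.2 hN.2.2.1

namespace Seminorm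

variable {E : Type*} [NormedAddCommGroup E] [NormedSpace ℝ E] [FiniteDimensional ℝ E]

theorem continuous_of_finiteDimensional (p : Seminorm ℝ E) : Continuous p :=
  p.convexOn.locallyLipschitz.continuous

-- `m` is the minimum of `p` on the compact unit sphere.
theorem exists_pos_mul_norm_le (p : Seminorm ℝ E) (hp : ∀ x, p x = 0 → x = 0) :
    ∃ m > 0, ∀ x, m * ‖x‖ ≤ p x := by
  rcases subsingleton_or_nontrivial E with hE | hE
  · exact ⟨1, one_pos, fun x => by simp [Subsingleton.elim x 0]⟩
  obtain ⟨x₀, hx₀, hmin⟩ := (isCompact_sphere (0 : E) 1).exists_isMinOn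
    (NormedSpace.sphere_nonempty.mpr zero_le_one) p.continuous_of_finiteDimensional.continuousOn
  have hx₀ : ‖x₀‖ = 1 := by simpa using hx₀
  have hpos : 0 < p x₀ :=
    (apply_nonneg p x₀).lt_of_ne fun h => by simp [hp x₀ h.symm] at hx₀
  refine ⟨p x₀, hpos, fun x => ?_⟩
  rcases eq_or_ne x 0 with rfl | hx
  · simp
  have hnorm : 0 < ‖x‖ := norm_pos_iff.mpr hx
  have hmem : ‖x‖⁻¹ • x ∈ Metric.sphere (0 : E) 1 := by
    simp [norm_smul, hnorm.ne']
  calc p x₀ * ‖x‖ ≤ p (‖x‖⁻¹ • x) * ‖x‖ := by gcongr; exact hmin hmem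
    _ = p x := by
      rw [map_smul_eq_mul, norm_inv, norm_norm]
      field_simp

theorem exists_tendsto_subseq (p : Seminorm ℝ E) (hp : ∀ x, p x = 0 → x = 0) {u : ℕ → E}
    {a : E} (hu : BddAbove (Set.range fun k => p (u k - a))) :
    ∃ d, ∃ φ : ℕ → ℕ, StrictMono φ ∧ Tendsto (u ∘ φ) atTop (𝓝 d) := by
  obtain ⟨m, hm, hpm⟩ := p.exists_pos_mul_norm_le hp
  obtain ⟨r, hr⟩ := hu
  have hball : ∀ k, u k ∈ Metric.closedBall a (r / m) := fun k => by
    rw [Metric.mem_closedBall, dist_eq_norm, le_div_iff₀ hm, mul_comm]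
    exact (hpm _).trans (hr ⟨k, rfl⟩)
  obtain ⟨d, -, hd⟩ := tendsto_subseq_of_bounded Metric.isBounded_closedBall hball
  exact ⟨d, hd⟩

end Seminorm

theorem tendsto_one_of_approx {α : Type*} {N : α → ℝ} {Nk : ℕ → α → ℝ}
    (happrox : ∀ k : ℕ, 1 ≤ k → ∀ x,
      (1 - 1 / (k : ℝ)) * Nk k x ≤ N x ∧ N x ≤ (1 + 1 / (k : ℝ)) * Nk k x)
    {u : ℕ → α} (hu : ∀ k, 1 ≤ k → Nk k (u k) = 1) :
    Tendsto (fun k => N (u k)) atTop (𝓝 1) := by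
  have h0 : Tendsto (fun k : ℕ => 1 / (k : ℝ)) atTop (𝓝 0) := tendsto_one_div_atTop_nhds_zero_nat
  refine tendsto_of_tendsto_of_tendsto_of_le_of_le' (by simpa using tendsto_const_nhds.sub h0)
    (by simpa using tendsto_const_nhds.add h0) ?_ ?_ <;>
  filter_upwards [eventually_ge_atTop 1] with k hk
  · simpa [hu k hk] using (happrox k hk (u k)).1
  · simpa [hu k hk] using (happrox k hk (u k)).2

theorem limit_of_equidistant_points_general (n : ℕ) (N : (Fin n → ℝ) → ℝ) (hN : IsNorm N)
    (Nk : ℕ → (Fin n → ℝ) → ℝ)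
    (happrox : ∀ k : ℕ, 1 ≤ k → ∀ x,
      (1 - 1 / (k : ℝ)) * Nk k x ≤ N x ∧ N x ≤ (1 + 1 / (k : ℝ)) * Nk k x)
    (a b c : Fin n → ℝ)
    (hd : ∀ k : ℕ, 1 ≤ k → ∃ dk : Fin n → ℝ,
      Nk k (dk - a) = 1 ∧ Nk k (dk - b) = 1 ∧ Nk k (dk - c) = 1) :
    ∃ d : Fin n → ℝ, N (d - a) = 1 ∧ N (d - b) = 1 ∧ N (d - c) = 1 := by
  choose! dk hdk using hd
  have hlim : ∀ q, (∀ k, 1 ≤ k → Nk k (dk k - q) = 1) →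
      Tendsto (fun k => N (dk k - q)) atTop (𝓝 1) := fun q hq =>
    tendsto_one_of_approx happrox hq
  obtain ⟨d, φ, hφ, hdφ⟩ := hN.toSeminorm.exists_tendsto_subseq (fun x => (hN.2.1 x).1)
    (hlim a fun k hk => (hdk k hk).1).bddAbove_range
  have hdist : ∀ q, (∀ k, 1 ≤ k → Nk k (dk k - q) = 1) → N (d - q) = 1 := fun q hq =>
    tendsto_nhds_unique
      ((hN.toSeminorm.continuous_of_finiteDimensional.tendsto _).comp (hdφ.sub_const q))
      ((hlim q hq).comp hφ.tendsto_atTop)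
  exact ⟨d, hdist a fun k hk => (hdk k hk).1, hdist b fun k hk => (hdk k hk).2.1,
    hdist c fun k hk => (hdk k hk).2.2⟩

theorem limit_of_equidistant_points (n : ℕ) (N : (Fin n → ℝ) → ℝ) (hN : IsNorm N)
    (Nk : ℕ → (Fin n → ℝ) → ℝ) (hNk : ∀ k, IsNorm (Nk k))
    (happrox : ∀ k : ℕ, 1 ≤ k → ∀ x,
      (1 - 1 / (k : ℝ)) * Nk k x ≤ N x ∧ N x ≤ (1 + 1 / (k : ℝ)) * Nk k x)
    (a b c : Fin n → ℝ)
    (hd : ∀ k : ℕ, 1 ≤ k → ∃ dk : Fin n → ℝ,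
      Nk k (dk - a) = 1 ∧ Nk k (dk - b) = 1 ∧ Nk k (dk - c) = 1) :
    ∃ d : Fin n → ℝ, N (d - a) = 1 ∧ N (d - b) = 1 ∧ N (d - c) = 1 :=
  limit_of_equidistant_points_general n N hN Nk happrox a b c hd
end

section
/- Let X be a 2-dimensional real normed space. Then the equilateral dimension of X is at least 3: there exist three points a, b, c ∈ X and p > 0 with ‖a−b‖ = ‖b−c‖ = ‖c−a‖ = p. -/
open Metric Set

/- The unit sphere of a real normed space of dimension at least two is connected, and on it the
distance to a fixed unit vector `x` runs from `0` (at `x`) to `2` (at `-x`); by the intermediate value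
theorem it takes the value `1` at some `y`, and then `0`, `x`, `y` form an equilateral triangle. -/

theorem exists_norm_eq_one_norm_sub_eq_one {E : Type*} [NormedAddCommGroup E] [NormedSpace ℝ E]
    (h : 1 < Module.rank ℝ E) {x : E} (hx : ‖x‖ = 1) : ∃ y : E, ‖y‖ = 1 ∧ ‖y - x‖ = 1 := by
  have hx_mem : x ∈ sphere (0 : E) 1 := by simpa using hx
  have hnegx_mem : -x ∈ sphere (0 : E) 1 := by simpa using hx
  have hivt := (isPreconnected_sphere h 0 1).intermediate_value hx_mem hnegx_mem
    (f := fun y : E => ‖y - x‖) (by fun_prop)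
  have hnegx : ‖-x - x‖ = 2 := by
    rw [← neg_add', norm_neg, ← two_smul ℝ x, norm_smul, hx, Real.norm_two, mul_one]
  obtain ⟨y, hy, hyx⟩ := hivt (by simp [hnegx] : (1 : ℝ) ∈ Icc ‖x - x‖ ‖-x - x‖)
  exact ⟨y, by simpa using hy, hyx⟩

theorem exists_equilateral_triangle {E : Type*} [NormedAddCommGroup E] [NormedSpace ℝ E]
    (h : 1 < Module.rank ℝ E) :
    ∃ (a b c : E) (p : ℝ), 0 < p ∧ ‖a - b‖ = p ∧ ‖b - c‖ = p ∧ ‖c - a‖ = p := by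
  have : Nontrivial E := rank_pos_iff_nontrivial.mp (zero_lt_one.trans h)
  obtain ⟨x, hx⟩ := exists_norm_eq E zero_le_one
  obtain ⟨y, hy, hyx⟩ := exists_norm_eq_one_norm_sub_eq_one h hx
  exact ⟨0, x, y, 1, one_pos, by rwa [zero_sub, norm_neg], by rwa [norm_sub_rev], by rwa [sub_zero]⟩

theorem equilateral_dim_two (X : Type*) [NormedAddCommGroup X] [NormedSpace ℝ X]
    (h2 : Module.finrank ℝ X = 2) :
    ∃ (a b c : X) (p : ℝ), 0 < p ∧ ‖a - b‖ = p ∧ ‖b - c‖ = p ∧ ‖c - a‖ = p :=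
  exists_equilateral_triangle (Module.one_lt_rank_of_one_lt_finrank (by omega))
end
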